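/- arXiv:2406.01823 — 2 statements merged into one kernel-verified Lean document; each statement's English description precedes it below -/
import Mathlib

section
/- Let G be a finite DAG, S ⊆ V a prefix subset, and v ∈ src(S̄). For any w ∈ S̄, either v and w are d-separated given S, or w is a descendant of v (w ∈ Des[v], including w = v). -/
open Relation

/-- Undirected adjacency induced by a directed edge relation. -/
def Adjacent {V : Type*} (E : V → V → Prop) (a b : V) : Prop := E a b ∨ E b a

/-- `x` is a collider on the path (vertex list) `p`: both neighboring edges point into `x`. -/
def IsCollider {V : Type*} (E : V → V → Prop) (p : List V) (x : V) : Prop :=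
  ∃ l1 a b l2, p = l1 ++ a :: x :: b :: l2 ∧ E a x ∧ E b x

/-- A path (vertex list) is active given a conditioning set `C`:
every collider is in `C` or has a descendant in `C`, and no non-collider is in `C`. -/
def ActivePath {V : Type*} (E : V → V → Prop) (C : Set V) (p : List V) : Prop :=
  (∀ x ∈ p, IsCollider E p x → ∃ d, ReflTransGen E x d ∧ d ∈ C) ∧
  (∀ x ∈ p, ¬ IsCollider E p x → x ∉ C)

/-- `p` is a path between `u` and `v`: consecutively adjacent, distinct vertices. -/
def IsPathBetween {V : Type*} (E : V → V → Prop) (u v : V) (p : List V) : Prop :=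
  p.Chain' (Adjacent E) ∧ p.Nodup ∧ p.head? = some u ∧ p.getLast? = some v

/-- `u` and `v` are d-connected given `C`. -/
def DConn {V : Type*} (E : V → V → Prop) (C : Set V) (u v : V) : Prop :=
  ∃ p, IsPathBetween E u v p ∧ ActivePath E C p

/-- `u` and `v` are d-separated given `C`. -/
def DSep {V : Type*} (E : V → V → Prop) (C : Set V) (u v : V) : Prop :=
  ¬ DConn E C u v

/-- `S` is a prefix (ancestrally closed) subset. -/
def IsPrefixSet {V : Type*} (E : V → V → Prop) (S : Set V) : Prop :=
  ∀ u v, E u v → v ∈ S → u ∈ S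

/-- Source vertices of the induced subgraph on `T`: vertices of `T` with no parent in `T`. -/
def srcOf {V : Type*} (E : V → V → Prop) (T : Set V) : Set V :=
  {v | v ∈ T ∧ ∀ u, E u v → u ∉ T}

/-- The edge relation is acyclic. -/
def Acyclic {V : Type*} (E : V → V → Prop) : Prop :=
  ∀ v, ¬ TransGen E v v

/-- `p` is a directed path from `u` to `v` (all edges forward). -/
def DirPath {V : Type*} (E : V → V → Prop) (u v : V) (p : List V) : Prop :=
  p.Chain' E ∧ p.head? = some u ∧ p.getLast? = some v

/-!
Every edge of an active path from the source `v` points away from `v`. Suppose the first one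
that does not is `a ← b`. If `a = v`, then `b ∈ S` because `v` has no parent outside `S`; an
active path keeps its non-colliders out of `S`, so `b` is a collider with parent `v`, and `v ∈ S`
since `S` is a prefix set. Otherwise `a` is a collider, so it has a descendant in `S`, hence lies
in `S`, and so does its ancestor `v`. Both cases contradict `v ∉ S`.
-/

open List

section

variable {V : Type*} {E : V → V → Prop} {S : Set V}

theorem IsPrefixSet.mem_of_reflTransGen (hS : IsPrefixSet E S) {a d : V}
    (had : ReflTransGen E a d) (hd : d ∈ S) : a ∈ S := by
  induction had using ReflTransGen.head_induction_on with
  | refl => exact hd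
  | head hab _ ih => exact hS _ _ hab ih

theorem IsCollider.rel_of_nodup_cons_cons {v x : V} {l : List V} (hnd : (v :: x :: l).Nodup)
    (hx : IsCollider E (v :: x :: l) x) : E v x := by
  obtain ⟨l1, a, b, l2, heq, hax, -⟩ := hx
  rcases l1 with _ | ⟨y, l1⟩
  · obtain ⟨rfl, -⟩ : v = a ∧ _ := by simpa using heq
    exact hax
  · have hxl : x ∈ l := by
      rcases l1 with _ | ⟨z, l1⟩ <;> simp_all
    exact absurd hxl (nodup_cons.mp (nodup_cons.mp hnd).2).1

theorem reflTransGen_of_isChain_append {v a : V} {t l1 l2 : List V}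
    (heq : v :: t = l1 ++ a :: l2) (h : List.IsChain E (l1 ++ [a])) : ReflTransGen E v a := by
  rcases l1 with _ | ⟨y, l1⟩
  · obtain ⟨rfl, -⟩ : v = a ∧ _ := by simpa using heq
    exact .refl
  · obtain ⟨rfl, -⟩ : v = y ∧ _ := by simpa using heq
    exact relationReflTransGen_of_exists_isChain_cons _ h (by simp)

theorem ActivePath.not_rel_of_isChain_append {v a b : V} {t l1 l2 : List V}
    (hS : IsPrefixSet E S) (hv : v ∈ srcOf E Sᶜ) (hnd : (v :: t).Nodup)
    (hact : ActivePath E S (v :: t)) (heq : v :: t = l1 ++ a :: b :: l2)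
    (hfwd : List.IsChain E (l1 ++ [a])) : ¬ E b a := by
  intro hba
  rcases eq_nil_or_concat l1 with rfl | ⟨l0, c, rfl⟩
  · obtain ⟨rfl, rfl⟩ : v = a ∧ t = b :: l2 := by simpa using heq
    have hbS : b ∈ S := by_contra fun hb => hv.2 b hba hb
    have hcol : IsCollider E (v :: b :: l2) b :=
      by_contra fun hb => hact.2 b (by simp) hb hbS
    exact hv.1 (hS _ _ (hcol.rel_of_nodup_cons_cons hnd) hbS)
  · have hca : E c a := by
      simp only [concat_eq_append, append_assoc, singleton_append,
        isChain_append_cons_cons] at hfwd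
      exact hfwd.2.1
    have hcol : IsCollider E (v :: t) a := ⟨l0, c, b, l2, by simpa using heq, hca, hba⟩
    obtain ⟨d, had, hdS⟩ := hact.1 a (by simp [heq]) hcol
    have hva : ReflTransGen E v a := reflTransGen_of_isChain_append (l2 := b :: l2) heq hfwd
    exact hv.1 (hS.mem_of_reflTransGen (hva.trans had) hdS)

theorem ActivePath.isChain_of_mem_srcOf {v : V} {t : List V} (hS : IsPrefixSet E S)
    (hv : v ∈ srcOf E Sᶜ) (hch : List.IsChain (Adjacent E) (v :: t)) (hnd : (v :: t).Nodup)
    (hact : ActivePath E S (v :: t)) : List.IsChain E (v :: t) := by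
  suffices ∀ l2 l1 a, v :: t = l1 ++ a :: l2 → List.IsChain E (l1 ++ [a]) →
      List.IsChain E (v :: t) from
    this t [] v rfl (List.isChain_singleton v)
  intro l2
  induction l2 with
  | nil => intro l1 a heq hfwd; rwa [heq]
  | cons b l2 ih =>
    intro l1 a heq hfwd
    have hadj : Adjacent E a b := (isChain_append_cons_cons.mp (heq ▸ hch)).2.1
    have hab : E a b := hadj.resolve_right (hact.not_rel_of_isChain_append hS hv hnd heq hfwd)
    refine ih (l1 ++ [a]) b (by simp [heq]) ?_
    simpa using isChain_append_cons_cons.mpr ⟨hfwd, hab, isChain_singleton b⟩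

theorem DConn.reflTransGen_of_mem_srcOf {v w : V} (hS : IsPrefixSet E S)
    (hv : v ∈ srcOf E Sᶜ) (hconn : DConn E S v w) : ReflTransGen E v w := by
  obtain ⟨p, ⟨hch, hnd, hhead, hlast⟩, hact⟩ := hconn
  obtain ⟨t, rfl⟩ : ∃ t, p = v :: t := by
    rcases p with _ | ⟨x, t⟩
    · simp at hhead
    · exact ⟨t, by simpa using hhead⟩
  exact relationReflTransGen_of_exists_isChain_cons t (hact.isChain_of_mem_srcOf hS hv hch hnd)
    (by simpa [getLast?_eq_some_getLast] using hlast)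

end

theorem source_dsep_or_descendant_general {V : Type*} (E : V → V → Prop)
    (S : Set V) (hS : IsPrefixSet E S)
    (v : V) (hv : v ∈ srcOf E Sᶜ) (w : V) :
    DSep E S v w ∨ ReflTransGen E v w :=
  or_iff_not_imp_left.mpr fun hconn => (not_not.mp hconn).reflTransGen_of_mem_srcOf hS hv

/-- for `v ∈ src(S̄)` and `w ∈ S̄`, either `v ⫫ w ∣ S` or `w ∈ Des[v]`. -/
theorem source_dsep_or_descendant {V : Type*} [Fintype V] (E : V → V → Prop)
    (hacyc : Acyclic E) (S : Set V) (hS : IsPrefixSet E S)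
    (v : V) (hv : v ∈ srcOf E Sᶜ) (w : V) (hw : w ∉ S) :
    DSep E S v w ∨ ReflTransGen E v w :=
  source_dsep_or_descendant_general E S hS v hv w
end

section
/- Let G be a finite DAG and S ⊆ V a prefix subset. Suppose w ∈ S̄ satisfies |Anc[w] ∩ src(S̄)| ≥ 2, say v₁ ≠ v₂ are both in Anc[w] ∩ src(S̄). Then v₁ and v₂ are d-separated given S but d-connected given S ∪ {w}. -/
open Relation

/-! Given `S`, a collider on an active path would lie in the ancestral set `S`, and so would its
parent on the path, which is not a collider (its successor on the path is its child). So an active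
path has no colliders; since `v₁` is a source of `S̄`, its first edge leaves `v₁`, and the path is
then a directed path `v₁ ⇝ v₂`, which is impossible between two sources of `S̄`.

Given `S ∪ {w}`, follow a directed path `v₁ ⇝ w` down to its first vertex `x` on a directed path
`v₂ ⇝ w`, then go back up to `v₂`. The vertex `x` is a collider with descendant `w`; every other
vertex is a non-collider descending from `v₁` or `v₂` (so outside `S`) and different from `w`. -/

theorem List.exists_split_first {α : Type*} {p : α → Prop} {l : List α} (h : ∃ a ∈ l, p a) :
    ∃ t x r, l = t ++ x :: r ∧ p x ∧ ∀ y ∈ t, ¬ p y := by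
  induction l with
  | nil => simp at h
  | cons a l ih =>
    by_cases ha : p a
    · exact ⟨[], a, l, rfl, ha, by simp⟩
    · obtain ⟨t, x, r, rfl, hx, ht⟩ := ih (by simpa [ha] using h)
      exact ⟨a :: t, x, r, rfl, hx, by simpa [ha] using ht⟩

section

variable {V : Type*} {E : V → V → Prop}

theorem IsPrefixSet.mem_of_reflTransGen_s7 {S : Set V} (hS : IsPrefixSet E S) {u v : V}
    (h : ReflTransGen E u v) (hv : v ∈ S) : u ∈ S := by
  induction h using ReflTransGen.head_induction_on with
  | refl => exact hv
  | head e _ ih => exact hS _ _ e ih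

theorem not_reflTransGen_of_mem_srcOf {S : Set V} (hS : IsPrefixSet E S) {u v : V}
    (hu : u ∈ srcOf E Sᶜ) (hv : v ∈ srcOf E Sᶜ) (hne : u ≠ v) : ¬ ReflTransGen E u v := by
  intro h
  obtain rfl | ⟨c, huc, hcv⟩ := h.cases_tail
  · exact hne rfl
  · exact hv.2 c hcv fun hc => hu.1 (hS.mem_of_reflTransGen_s7 huc hc)

theorem Acyclic.nodup_of_isChain (hacyc : Acyclic E) {l : List V} (h : l.IsChain E) :
    l.Nodup := by
  refine List.Pairwise.imp ?_ (h.imp fun _ _ => TransGen.single).pairwise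
  rintro a _ hab rfl
  exact hacyc a hab

theorem exists_dirPath_of_reflTransGen {u v : V} (h : ReflTransGen E u v) :
    ∃ p, DirPath E u v p := by
  obtain ⟨l, hc, hl⟩ := List.exists_isChain_cons_of_relationReflTransGen h
  exact ⟨u :: l, hc, rfl, by rw [List.getLast?_eq_some_getLast (List.cons_ne_nil u l), hl]⟩

namespace DirPath

variable {u v y : V} {p : List V}

theorem reflTransGen_head_of_mem (hp : DirPath E u v p) (hy : y ∈ p) : ReflTransGen E u y := by
  obtain ⟨l, rfl⟩ := List.head?_eq_some_iff.mp hp.2.1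
  obtain rfl | hy := List.mem_cons.mp hy
  · exact .refl
  · exact List.rel_of_pairwise_cons (hp.1.imp fun _ _ => .single).pairwise hy

theorem reflTransGen_getLast_of_mem (hp : DirPath E u v p) (hy : y ∈ p) : ReflTransGen E y v := by
  obtain ⟨l, rfl⟩ := List.getLast?_eq_some_iff.mp hp.2.2
  obtain hy | rfl := List.mem_append.mp hy |>.imp_right List.mem_singleton.mp
  · exact List.pairwise_append.mp (hp.1.imp fun _ _ => .single).pairwise |>.2.2 y hy v (by simp)
  · exact .refl

theorem reflTransGen (hp : DirPath E u v p) : ReflTransGen E u v :=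
  hp.reflTransGen_head_of_mem (List.mem_of_getLast? hp.2.2)

theorem append_cons {t r : List V} {x : V} (hp : DirPath E u v (t ++ x :: r)) :
    DirPath E u x (t ++ [x]) :=
  ⟨hp.1.prefix (by simp), by simpa [List.head?_append] using hp.2.1, by simp⟩

theorem ne_nil_of_ne {t : List V} {x : V} (hp : DirPath E u x (t ++ [x])) (hux : u ≠ x) :
    t ≠ [] := by
  rintro rfl
  exact hux (by simpa using hp.2.1.symm)

end DirPath

theorem IsCollider.cons {p : List V} {x : V} (h : IsCollider E p x) (y : V) :
    IsCollider E (y :: p) x := by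
  obtain ⟨l₁, a, b, l₂, rfl, hax, hbx⟩ := h
  exact ⟨y :: l₁, a, b, l₂, rfl, hax, hbx⟩

theorem ActivePath.not_isCollider (hacyc : Acyclic E) {S : Set V} (hS : IsPrefixSet E S)
    {p : List V} (hp : p.Nodup) (ha : ActivePath E S p) {x : V} (hx : x ∈ p) :
    ¬ IsCollider E p x := by
  intro hcol
  obtain ⟨d, hxd, hd⟩ := ha.1 x hx hcol
  obtain ⟨l₁, a, b, l₂, rfl, hax, -⟩ := hcol
  have hnot_col : ¬ IsCollider E (l₁ ++ a :: x :: b :: l₂) a := by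
    rintro ⟨l₁', a', b', l₂', heq, -, hb'a⟩
    have ha_nmem : a ∉ l₁ ++ x :: b :: l₂ := (List.nodup_cons.mp (List.nodup_middle.mp hp)).1
    rw [show l₁' ++ a' :: a :: b' :: l₂' = (l₁' ++ [a']) ++ a :: b' :: l₂' by simp,
      List.append_cons_inj_of_notMem (fun h => ha_nmem (by simp [h]))
        (fun h => ha_nmem (List.mem_append_right _ h))] at heq
    obtain ⟨-, -, rfl, -⟩ := heq
    exact hacyc a (.head hax (.single hb'a))
  exact ha.2 a (by simp) hnot_col (hS a x hax (hS.mem_of_reflTransGen_s7 hxd hd))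

theorem isChain_of_forall_not_isCollider :
    ∀ {l : List V} {a b : V}, E a b → (a :: b :: l).IsChain (Adjacent E) →
      (∀ x ∈ a :: b :: l, ¬ IsCollider E (a :: b :: l) x) → (a :: b :: l).IsChain E
  | [], _, _, hab, _, _ => List.isChain_pair.mpr hab
  | c :: l, a, b, hab, hadj, hnc => by
    obtain ⟨-, hadj'⟩ := List.isChain_cons_cons.mp hadj
    have hbc : E b c := (List.isChain_cons_cons.mp hadj').1.resolve_right
      fun hcb => hnc b (by simp) ⟨[], a, c, l, rfl, hab, hcb⟩
    exact List.isChain_cons_cons.mpr ⟨hab, isChain_of_forall_not_isCollider hbc hadj'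
      fun x hx hcol => hnc x (List.mem_cons_of_mem _ hx) (hcol.cons a)⟩

theorem dSep_of_mem_srcOf (hacyc : Acyclic E) {S : Set V} (hS : IsPrefixSet E S) {v₁ v₂ : V}
    (hne : v₁ ≠ v₂) (hv₁ : v₁ ∈ srcOf E Sᶜ) (hv₂ : v₂ ∈ srcOf E Sᶜ) : DSep E S v₁ v₂ := by
  rintro ⟨p, ⟨hadj, hnd, hhead, hlast⟩, hact⟩
  have hnc x (hx : x ∈ p) := hact.not_isCollider hacyc hS hnd hx
  obtain ⟨l, rfl⟩ := List.head?_eq_some_iff.mp hhead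
  cases l with
  | nil => exact hne (by simpa using hlast)
  | cons u l =>
    have hu : u ∉ S := hact.2 u (by simp) (hnc u (by simp))
    have hv₁u : E v₁ u :=
      (List.isChain_cons_cons.mp hadj).1.resolve_right fun huv => hv₁.2 u huv hu
    have hdir : DirPath E v₁ v₂ (v₁ :: u :: l) :=
      ⟨isChain_of_forall_not_isCollider hv₁u hadj hnc, rfl, hlast⟩
    exact not_reflTransGen_of_mem_srcOf hS hv₁ hv₂ hne hdir.reflTransGen

theorem isPathBetween_append_cons_reverse (hacyc : Acyclic E) {t₁ t₂ : List V} {v₁ v₂ x : V}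
    (hp₁ : DirPath E v₁ x (t₁ ++ [x])) (hp₂ : DirPath E v₂ x (t₂ ++ [x]))
    (h₁ : v₁ ≠ x) (hdisj : t₁.Disjoint t₂) :
    IsPathBetween E v₁ v₂ (t₁ ++ x :: t₂.reverse) := by
  have hrev : x :: t₂.reverse = (t₂ ++ [x]).reverse := by simp
  have hn₁ := hacyc.nodup_of_isChain hp₁.1
  have hn₂ := hacyc.nodup_of_isChain hp₂.1
  refine ⟨List.isChain_split.mpr ⟨hp₁.1.imp fun _ _ => Or.inl, ?_⟩, ?_, ?_, ?_⟩
  · rw [hrev, List.isChain_reverse]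
    exact hp₂.1.imp fun _ _ => Or.inr
  · simp only [List.nodup_append, List.nodup_cons, List.nodup_reverse, List.mem_reverse,
      List.mem_cons, List.not_mem_nil, or_false] at hn₁ hn₂ ⊢
    exact ⟨hn₁.1, ⟨fun hx => hn₂.2.2 x hx x rfl rfl, hn₂.1⟩, fun a ha b hb hab =>
      hb.elim (hn₁.2.2 a ha b · hab) fun hb => hdisj ha (hab ▸ hb)⟩
  · rw [List.head?_append_of_ne_nil _ (hp₁.ne_nil_of_ne h₁)]
    simpa [List.head?_append_of_ne_nil _ (hp₁.ne_nil_of_ne h₁)] using hp₁.2.1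
  · rw [List.getLast?_append_cons, hrev, List.getLast?_reverse, hp₂.2.1]

theorem isCollider_append_cons_reverse {t₁ t₂ : List V} {x : V} (ht₁ : t₁ ≠ []) (ht₂ : t₂ ≠ [])
    (hc₁ : (t₁ ++ [x]).IsChain E) (hc₂ : (t₂ ++ [x]).IsChain E) :
    IsCollider E (t₁ ++ x :: t₂.reverse) x := by
  obtain ⟨s₁, a, rfl⟩ := (List.eq_nil_or_concat t₁).resolve_left ht₁
  obtain ⟨s₂, b, rfl⟩ := (List.eq_nil_or_concat t₂).resolve_left ht₂
  simp only [List.concat_eq_append, List.append_assoc, List.singleton_append] at hc₁ hc₂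
  exact ⟨s₁, a, b, s₂.reverse, by simp, (List.isChain_append_cons_cons.mp hc₁).2.1,
    (List.isChain_append_cons_cons.mp hc₂).2.1⟩

theorem dConn_union_singleton_of_reflTransGen (hacyc : Acyclic E) {A : Set V} {v₁ v₂ w : V}
    (h₁₂ : ¬ ReflTransGen E v₁ v₂) (h₂₁ : ¬ ReflTransGen E v₂ v₁)
    (hw₁ : ReflTransGen E v₁ w) (hw₂ : ReflTransGen E v₂ w)
    (hA₁ : ∀ y, ReflTransGen E v₁ y → y ∉ A) (hA₂ : ∀ y, ReflTransGen E v₂ y → y ∉ A) :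
    DConn E (A ∪ {w}) v₁ v₂ := by
  obtain ⟨p₁, hp₁⟩ := exists_dirPath_of_reflTransGen hw₁
  obtain ⟨p₂, hp₂⟩ := exists_dirPath_of_reflTransGen hw₂
  obtain ⟨t₁, x, r₁, rfl, hx₂, ht₁⟩ :=
    List.exists_split_first ⟨w, List.mem_of_getLast? hp₁.2.2, List.mem_of_getLast? hp₂.2.2⟩
  obtain ⟨t₂, r₂, rfl⟩ := List.append_of_mem hx₂
  have hq₁ := hp₁.append_cons
  have hq₂ := hp₂.append_cons
  have hv₁x : v₁ ≠ x := fun h => h₂₁ (h ▸ hp₂.reflTransGen_head_of_mem hx₂)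
  have hv₂x : v₂ ≠ x := fun h => h₁₂ (h ▸ hp₁.reflTransGen_head_of_mem (by simp))
  have hcol := isCollider_append_cons_reverse (hq₁.ne_nil_of_ne hv₁x) (hq₂.ne_nil_of_ne hv₂x)
    hq₁.1 hq₂.1
  have hw_t₂ : w ∉ t₂ := fun hw => List.disjoint_of_nodup_append (hacyc.nodup_of_isChain hp₂.1) hw
    (List.mem_of_getLast? (by rw [← List.getLast?_append_cons t₂]; exact hp₂.2.2))
  refine ⟨_, isPathBetween_append_cons_reverse hacyc hq₁ hq₂ hv₁x
    (fun y hy₁ hy₂ => ht₁ y hy₁ (by simp [hy₂])), ?_, ?_⟩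
  · intro y hy _
    refine ⟨w, ?_, Or.inr rfl⟩
    simp only [List.mem_append, List.mem_cons, List.mem_reverse] at hy
    rcases hy with hy | rfl | hy
    · exact hp₁.reflTransGen_getLast_of_mem (by simp [hy])
    · exact hp₁.reflTransGen_getLast_of_mem (by simp)
    · exact hp₂.reflTransGen_getLast_of_mem (by simp [hy])
  · intro y hy hy_nc hyC
    simp only [List.mem_append, List.mem_cons, List.mem_reverse] at hy
    rcases hy with hy | rfl | hy
    · rcases hyC with hyA | rfl
      · exact hA₁ y (hp₁.reflTransGen_head_of_mem (by simp [hy])) hyA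
      · exact ht₁ y hy (List.mem_of_getLast? hp₂.2.2)
    · exact hy_nc hcol
    · rcases hyC with hyA | rfl
      · exact hA₂ y (hp₂.reflTransGen_head_of_mem (by simp [hy])) hyA
      · exact hw_t₂ hy

end

theorem two_source_ancestors_vstructure_general {V : Type*} (E : V → V → Prop)
    (hacyc : Acyclic E) (S : Set V) (hS : IsPrefixSet E S)
    (w : V) (v₁ v₂ : V) (hne : v₁ ≠ v₂)
    (hv₁ : v₁ ∈ srcOf E Sᶜ) (hv₂ : v₂ ∈ srcOf E Sᶜ)
    (ha₁ : ReflTransGen E v₁ w) (ha₂ : ReflTransGen E v₂ w) :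
    DSep E S v₁ v₂ ∧ DConn E (S ∪ {w}) v₁ v₂ :=
  ⟨dSep_of_mem_srcOf hacyc hS hne hv₁ hv₂,
    dConn_union_singleton_of_reflTransGen hacyc
      (not_reflTransGen_of_mem_srcOf hS hv₁ hv₂ hne)
      (not_reflTransGen_of_mem_srcOf hS hv₂ hv₁ hne.symm) ha₁ ha₂
      (fun _ hy hyS => hv₁.1 (hS.mem_of_reflTransGen_s7 hy hyS))
      (fun _ hy hyS => hv₂.1 (hS.mem_of_reflTransGen_s7 hy hyS))⟩

/-- if `w ∈ S̄` has two distinct ancestors-or-self in `src(S̄)`, then those two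
sources are d-separated given `S` but d-connected given `S ∪ {w}`. -/
theorem two_source_ancestors_vstructure {V : Type*} [Fintype V] (E : V → V → Prop)
    (hacyc : Acyclic E) (S : Set V) (hS : IsPrefixSet E S)
    (w : V) (hw : w ∉ S) (v₁ v₂ : V) (hne : v₁ ≠ v₂)
    (hv₁ : v₁ ∈ srcOf E Sᶜ) (hv₂ : v₂ ∈ srcOf E Sᶜ)
    (ha₁ : ReflTransGen E v₁ w) (ha₂ : ReflTransGen E v₂ w) :
    DSep E S v₁ v₂ ∧ DConn E (S ∪ {w}) v₁ v₂ :=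
  two_source_ancestors_vstructure_general E hacyc S hS w v₁ v₂ hne hv₁ hv₂ ha₁ ha₂
end
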